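/- Let u and h be smooth fields on ℝ × ℝ³ and set ω = ∇×u. If the momentum equation holds in the barotropic Crocco form ∂u/∂t − u×ω + ∇(h + |u|²/2) = 0 (no entropy-gradient source), then the fluid helicity density h_f = u·ω satisfies the local conservation law ∂h_f/∂t + ∇·[ u h_f + (h − |u|²/2) ω ] = 0. -/

import Mathlib

noncomputable section

/-- Vectors in ℝ³. -/
abbrev Vec3 : Type := Fin 3 → ℝ

/-- Points of space-time: `(t, x)` with `t : ℝ`, `x : Fin 3 → ℝ`. -/
abbrev Pt : Type := ℝ × Vec3

/-- Euclidean dot product on ℝ³. -/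
def dot3 (a b : Vec3) : ℝ := ∑ i, a i * b i

/-- Cross product on ℝ³. -/
def cross3 (a b : Vec3) : Vec3 :=
  ![a 1 * b 2 - a 2 * b 1, a 2 * b 0 - a 0 * b 2, a 0 * b 1 - a 1 * b 0]

/-- Spatial partial derivative ∂f/∂xᵢ of a scalar field. -/
def pd (i : Fin 3) (f : Pt → ℝ) (p : Pt) : ℝ :=
  fderiv ℝ (fun x => f (p.1, x)) p.2 (Pi.single i 1)

/-- Time derivative ∂f/∂t of a scalar field. -/
def dt (f : Pt → ℝ) (p : Pt) : ℝ := deriv (fun s => f (s, p.2)) p.1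

/-- Time derivative of a vector field, componentwise. -/
def dtVec (F : Pt → Vec3) (p : Pt) : Vec3 := fun i => dt (fun q => F q i) p

/-- Spatial gradient ∇f of a scalar field. -/
def grad3 (f : Pt → ℝ) (p : Pt) : Vec3 := fun i => pd i f p

/-- Spatial divergence ∇·F of a vector field. -/
def div3 (F : Pt → Vec3) (p : Pt) : ℝ := ∑ i, pd i (fun q => F q i) p

/-- Spatial curl ∇×F of a vector field. -/
def curl3 (F : Pt → Vec3) (p : Pt) : Vec3 :=
  ![pd 1 (fun q => F q 2) p - pd 2 (fun q => F q 1) p,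
    pd 2 (fun q => F q 0) p - pd 0 (fun q => F q 2) p,
    pd 0 (fun q => F q 1) p - pd 1 (fun q => F q 0) p]

/-- Directional derivative (u·∇)f of a scalar field. -/
def dirD (u : Pt → Vec3) (f : Pt → ℝ) (p : Pt) : ℝ := ∑ i, u p i * pd i f p

/-- Directional derivative (u·∇)F of a vector field. -/
def dirDVec (u F : Pt → Vec3) (p : Pt) : Vec3 :=
  fun j => ∑ i, u p i * pd i (fun q => F q j) p

/-- (∇u)ᵀ·A, the vector with i-th component ∑ⱼ (∂uʲ/∂xⁱ) Aⱼ. -/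
def gradTdot (u A : Pt → Vec3) (p : Pt) : Vec3 :=
  fun i => ∑ j, pd i (fun q => u q j) p * A p j

/-- A field is smooth when it is C^∞ jointly in time and space. -/
def SmoothS (f : Pt → ℝ) : Prop := ContDiff ℝ (⊤ : ℕ∞) f

/-- A vector field is smooth when it is C^∞ jointly in time and space. -/
def SmoothV (F : Pt → Vec3) : Prop := ContDiff ℝ (⊤ : ℕ∞) F

/-!
With `ω = ∇×u` and the Bernoulli function `B = h + |u|²/2`, the momentum equation reads
`∂ₜu = u×ω − ∇B`; its curl is the vorticity equation `∂ₜω = ∇×(u×ω)`, as `∇×∇B = 0`. Hence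
`∂ₜ(u·ω) = −∇B·ω + u·∇×(u×ω)`. The flux is `Bω − (u×ω)×u`, and since `∇·ω = 0` and
`∇·(A×C) = C·∇×A − A·∇×C`, its divergence is `∇B·ω − u·∇×(u×ω) + (u×ω)·ω`, where the
triple product `(u×ω)·ω` vanishes.
-/

open scoped ContDiff Matrix

section SecondDerivatives

variable {E F : Type*} [NormedAddCommGroup E] [NormedSpace ℝ E] [NormedAddCommGroup F]
  [NormedSpace ℝ F] {f : E → F}

theorem differentiable_fderiv_apply (hf : ContDiff ℝ 2 f) (v : E) :
    Differentiable ℝ (fun x => fderiv ℝ f x v) :=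
  ((hf.fderiv_right (m := 1) le_rfl).differentiable one_ne_zero).clm_apply (differentiable_const _)

theorem fderiv_fderiv_apply_comm (hf : ContDiff ℝ 2 f) (v w x : E) :
    fderiv ℝ (fun y => fderiv ℝ f y v) x w = fderiv ℝ (fun y => fderiv ℝ f y w) x v := by
  have hf' : Differentiable ℝ (fderiv ℝ f) :=
    (hf.fderiv_right (m := 1) le_rfl).differentiable one_ne_zero
  simp only [fderiv_clm_apply (hf' x) (differentiableAt_const _), fderiv_fun_const, Pi.zero_apply,
    ContinuousLinearMap.comp_zero, zero_add, ContinuousLinearMap.flip_apply]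
  exact (hf.contDiffAt.isSymmSndFDerivAt (by simp)).eq w v

end SecondDerivatives

section ScalarCalculus

variable {f g : Pt → ℝ}

theorem pd_eq_fderiv (hf : Differentiable ℝ f) (i : Fin 3) :
    pd i f = fun p => fderiv ℝ f p (0, Pi.single i 1) := by
  funext ⟨t, x⟩
  have := ((hf (t, x)).hasFDerivAt.comp x (hasFDerivAt_prodMk_right t x)).fderiv
  simp_all [pd, Function.comp_def]

theorem dt_eq_fderiv (hf : Differentiable ℝ f) : dt f = fun p => fderiv ℝ f p (1, 0) := by
  funext ⟨t, x⟩
  have := ((hf (t, x)).hasFDerivAt.comp t (hasFDerivAt_prodMk_left t x)).hasDerivAt.deriv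
  simp_all [dt, Function.comp_def]

@[fun_prop]
theorem ContDiff.pd (hf : ContDiff ℝ ∞ f) (i : Fin 3) : ContDiff ℝ ∞ (pd i f) := by
  rw [pd_eq_fderiv (hf.differentiable (by simp))]
  exact (hf.fderiv_right le_rfl).clm_apply contDiff_const

theorem pd_pd_comm (hf : ContDiff ℝ 2 f) (i j : Fin 3) (p : Pt) :
    pd i (pd j f) p = pd j (pd i f) p := by
  simp only [pd_eq_fderiv (hf.differentiable two_ne_zero),
    pd_eq_fderiv (differentiable_fderiv_apply hf _)]
  exact fderiv_fderiv_apply_comm hf _ _ p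

theorem dt_pd_comm (hf : ContDiff ℝ 2 f) (i : Fin 3) (p : Pt) :
    dt (pd i f) p = pd i (dt f) p := by
  simp only [pd_eq_fderiv (hf.differentiable two_ne_zero), dt_eq_fderiv (hf.differentiable two_ne_zero),
    pd_eq_fderiv (differentiable_fderiv_apply hf _), dt_eq_fderiv (differentiable_fderiv_apply hf _)]
  exact fderiv_fderiv_apply_comm hf _ _ p

theorem pd_sub (hf : Differentiable ℝ f) (hg : Differentiable ℝ g) (i : Fin 3) (p : Pt) :
    pd i (fun q => f q - g q) p = pd i f p - pd i g p := by
  simp [pd_eq_fderiv, hf, hg, fderiv_fun_sub (hf p) (hg p)]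

theorem pd_mul (hf : Differentiable ℝ f) (hg : Differentiable ℝ g) (i : Fin 3) (p : Pt) :
    pd i (fun q => f q * g q) p = f p * pd i g p + g p * pd i f p := by
  simp [pd_eq_fderiv, hf, hg, fderiv_fun_mul (hf p) (hg p)]

theorem dt_add (hf : Differentiable ℝ f) (hg : Differentiable ℝ g) (p : Pt) :
    dt (fun q => f q + g q) p = dt f p + dt g p := by
  simp [dt_eq_fderiv, hf, hg, fderiv_fun_add (hf p) (hg p)]

theorem dt_sub (hf : Differentiable ℝ f) (hg : Differentiable ℝ g) (p : Pt) :
    dt (fun q => f q - g q) p = dt f p - dt g p := by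
  simp [dt_eq_fderiv, hf, hg, fderiv_fun_sub (hf p) (hg p)]

theorem dt_mul (hf : Differentiable ℝ f) (hg : Differentiable ℝ g) (p : Pt) :
    dt (fun q => f q * g q) p = dt f p * g p + f p * dt g p := by
  simp [dt_eq_fderiv, hf, hg, fderiv_fun_mul (hf p) (hg p)]
  ring

end ScalarCalculus

section Smoothness

variable {E : Type*} [NormedAddCommGroup E] [NormedSpace ℝ E] {n : WithTop ℕ∞} {u v : E → Vec3}

@[fun_prop]
theorem ContDiff.dot3 (hu : ContDiff ℝ n u) (hv : ContDiff ℝ n v) :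
    ContDiff ℝ n (fun x => dot3 (u x) (v x)) := by
  unfold _root_.dot3
  fun_prop

@[fun_prop]
theorem ContDiff.cross3 (hu : ContDiff ℝ n u) (hv : ContDiff ℝ n v) :
    ContDiff ℝ n (fun x => cross3 (u x) (v x)) := by
  refine contDiff_pi.2 fun i => ?_
  fin_cases i <;> simp [_root_.cross3] <;> fun_prop

@[fun_prop]
theorem ContDiff.grad3 {f : Pt → ℝ} (hf : ContDiff ℝ ∞ f) : ContDiff ℝ ∞ (grad3 f) :=
  contDiff_pi.2 fun i => hf.pd i

@[fun_prop]
theorem ContDiff.curl3 {F : Pt → Vec3} (hF : ContDiff ℝ ∞ F) : ContDiff ℝ ∞ (curl3 F) := by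
  refine contDiff_pi.2 fun i => ?_
  fin_cases i <;> simp [_root_.curl3] <;> fun_prop

end Smoothness

section VectorCalculus

variable {f : Pt → ℝ} {u v F G : Pt → Vec3}

theorem dt_dot3 (hu : Differentiable ℝ u) (hv : Differentiable ℝ v) (p : Pt) :
    dt (fun q => dot3 (u q) (v q)) p = dot3 (dtVec u p) (v p) + dot3 (u p) (dtVec v p) := by
  simp (disch := fun_prop) only [dot3, dtVec, Fin.sum_univ_three, dt_add, dt_mul]
  ring

theorem curl3_sub (hF : Differentiable ℝ F) (hG : Differentiable ℝ G) (p : Pt) :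
    curl3 (fun q => F q - G q) p = curl3 F p - curl3 G p := by
  ext i
  fin_cases i <;>
    simp (disch := fun_prop) only [curl3, Pi.sub_apply, pd_sub, Fin.zero_eta, Fin.mk_one,
      Fin.reduceFinMk, Matrix.cons_val] <;>
    ring

theorem curl3_grad3 (hf : ContDiff ℝ 2 f) (p : Pt) : curl3 (grad3 f) p = 0 := by
  ext i
  fin_cases i <;>
    simp only [curl3, grad3, pd_pd_comm hf _ _ p, Fin.zero_eta, Fin.mk_one, Fin.reduceFinMk,
      Matrix.cons_val, sub_self, Pi.zero_apply]

theorem dtVec_curl3 (hF : ContDiff ℝ ∞ F) (p : Pt) : dtVec (curl3 F) p = curl3 (dtVec F) p := by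
  have hF2 (j : Fin 3) : ContDiff ℝ 2 (fun q => F q j) := (contDiff_pi.1 hF j).of_le (by norm_cast)
  ext i
  fin_cases i <;>
    simp (disch := fun_prop (disch := simp)) only [curl3, dtVec, dt_sub, dt_pd_comm (hF2 _),
      Fin.zero_eta, Fin.mk_one, Fin.reduceFinMk, Matrix.cons_val]

theorem div3_sub (hF : Differentiable ℝ F) (hG : Differentiable ℝ G) (p : Pt) :
    div3 (fun q => F q - G q) p = div3 F p - div3 G p := by
  simp (disch := fun_prop) only [div3, Pi.sub_apply, pd_sub, Finset.sum_sub_distrib]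

theorem div3_smul (hf : Differentiable ℝ f) (hF : Differentiable ℝ F) (p : Pt) :
    div3 (fun q => f q • F q) p = dot3 (grad3 f p) (F p) + f p * div3 F p := by
  simp (disch := fun_prop) only [div3, dot3, grad3, Pi.smul_apply, smul_eq_mul, pd_mul,
    Finset.sum_add_distrib, Finset.mul_sum, mul_comm (F p _)]
  ring

theorem div3_cross3 (hu : Differentiable ℝ u) (hv : Differentiable ℝ v) (p : Pt) :
    div3 (fun q => cross3 (u q) (v q)) p = dot3 (v p) (curl3 u p) - dot3 (u p) (curl3 v p) := by
  simp (disch := fun_prop) only [div3, dot3, cross3, curl3, Fin.sum_univ_three, pd_sub, pd_mul,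
    Matrix.cons_val]
  ring

theorem div3_curl3 (hF : ContDiff ℝ ∞ F) (p : Pt) : div3 (curl3 F) p = 0 := by
  have hF2 (j : Fin 3) : ContDiff ℝ 2 (fun q => F q j) := (contDiff_pi.1 hF j).of_le (by norm_cast)
  simp (disch := fun_prop (disch := simp)) only [div3, curl3, Fin.sum_univ_three, pd_sub,
    Matrix.cons_val, pd_pd_comm (hF2 _) _ _ p]
  ring

end VectorCalculus

theorem cross3_eq_crossProduct (a b : Vec3) : cross3 a b = a ⨯₃ b := rfl

theorem dot3_eq_dotProduct (a b : Vec3) : dot3 a b = a ⬝ᵥ b := rfl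

theorem helicity_flux_eq (a w : Vec3) (c : ℝ) :
    dot3 a w • a + (c - dot3 a a / 2) • w = (c + dot3 a a / 2) • w - cross3 (cross3 a w) a := by
  simp only [cross3_eq_crossProduct, dot3_eq_dotProduct, cross_cross_eq_smul_sub_smul,
    dotProduct_comm w]
  module

theorem dtVec_curl3_of_crocco {u : Pt → Vec3} {B : Pt → ℝ} (hu : ContDiff ℝ ∞ u)
    (hB : ContDiff ℝ ∞ B) (hcrocco : dtVec u = fun q => cross3 (u q) (curl3 u q) - grad3 B q)
    (p : Pt) : dtVec (curl3 u) p = curl3 (fun q => cross3 (u q) (curl3 u q)) p := by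
  rw [dtVec_curl3 hu, hcrocco, curl3_sub (by fun_prop (disch := simp)) (by fun_prop (disch := simp)),
    curl3_grad3 (hB.of_le (by norm_cast)), sub_zero]

/-- barotropic Crocco momentum equation implies local
    conservation of the fluid helicity density h_f = u·ω. -/
theorem helicity_conservation_barotropic
    (u : Pt → Vec3) (h : Pt → ℝ)
    (hu : SmoothV u) (hh : SmoothS h)
    (hmom : ∀ p : Pt,
      dtVec u p - cross3 (u p) (curl3 u p)
        + grad3 (fun q => h q + dot3 (u q) (u q) / 2) p = 0) :
    ∀ p : Pt,
      dt (fun q => dot3 (u q) (curl3 u q)) p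
        + div3 (fun q =>
            dot3 (u q) (curl3 u q) • u q
              + (h q - dot3 (u q) (u q) / 2) • curl3 u q) p = 0 := by
  intro p
  unfold SmoothV at hu
  unfold SmoothS at hh
  set B := fun q => h q + dot3 (u q) (u q) / 2
  have hB : ContDiff ℝ ∞ B := by fun_prop
  have hcrocco : dtVec u = fun q => cross3 (u q) (curl3 u q) - grad3 B q :=
    funext fun q => by linear_combination hmom q
  have hflux := funext fun q => helicity_flux_eq (u q) (curl3 u q) (h q)
  have du : Differentiable ℝ u := hu.differentiable (by simp)
  have dω : Differentiable ℝ (curl3 u) := hu.curl3.differentiable (by simp)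
  rw [dt_dot3 du dω, dtVec_curl3_of_crocco hu hB hcrocco, hflux,
    div3_sub (by fun_prop (disch := simp)) (by fun_prop (disch := simp)),
    div3_smul (hB.differentiable (by simp)) dω, div3_curl3 hu,
    div3_cross3 (by fun_prop (disch := simp)) du, hcrocco]
  simp only [cross3_eq_crossProduct, dot3_eq_dotProduct, sub_dotProduct,
    dotProduct_comm (u p ⨯₃ curl3 u p), dot_cross_self]
  ring
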